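/- arXiv:1803.05614 — 2 statements merged into one kernel-verified Lean document; each statement's English description precedes it below -/
import Mathlib

section
/- Let Ω₀ = {P₁,P₂,P₃,P₄} as in the Demyanov–Ryabova counterexample. For any g = (g_x,g_y) with g_x > 0 and g_y > 2g_x, the polytope P_{Ω₀}(g) equals conv{(-1,1),(1,2),(2,0)}. -/
/-! For `g₁ > 0` and `g₂ > 2 g₁` each generating set of `P₁, …, P₄` has a single vertex at which
`⟨·, g⟩` is strictly largest, namely `(1,1)`, `(-1,1)`, `(1,2)`, `(2,0)`; that vertex is then the
whole face `Argmax_{P_i} ⟨·, g⟩`. Of the four points, `(1,1) = ⅕(-1,1) + ⅖(1,2) + ⅖(2,0)` is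
redundant in the convex hull. -/

open Set

noncomputable section

/-- Standard inner product on ℝ². -/
def dot2 (v g : ℝ × ℝ) : ℝ := v.1 * g.1 + v.2 * g.2

/-- Argmax of the linear functional ⟨·,g⟩ over P. -/
def argmax2 (P : Set (ℝ × ℝ)) (g : ℝ × ℝ) : Set (ℝ × ℝ) :=
  {v ∈ P | ∀ u ∈ P, dot2 u g ≤ dot2 v g}

/-- P_Ω(g) = conv ⋃_{P∈Ω} Argmax_{v∈P}⟨v,g⟩. -/
def polyConv (Ω : Set (Set (ℝ × ℝ))) (g : ℝ × ℝ) : Set (ℝ × ℝ) :=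
  convexHull ℝ (⋃ P ∈ Ω, argmax2 P g)

def P1 : Set (ℝ × ℝ) := convexHull ℝ {(1, 0), (1, 1), (-1, 0)}
def P2 : Set (ℝ × ℝ) := convexHull ℝ {(-1, 0), (-1, 1), (1, 0)}
def P3 : Set (ℝ × ℝ) := convexHull ℝ {(1, 2), (-1, 2), (0, 0)}
def P4 : Set (ℝ × ℝ) := convexHull ℝ {(2, 0), (-2, 0)}

def Ω0 : Set (Set (ℝ × ℝ)) := {P1, P2, P3, P4}

/-- Reflection through the y-axis. -/
def σ2 : ℝ × ℝ → ℝ × ℝ := fun p => (-p.1, p.2)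

section ConvexHull

variable {E : Type*} [AddCommGroup E] [Module ℝ E]

/- An open half-space together with one point of its boundary is convex; this is what carries
strict maximality of `f` at `v` from `s` to `convexHull ℝ s`. -/
theorem convex_insert_setOf_lt (f : E →ₗ[ℝ] ℝ) (v : E) :
    Convex ℝ (insert v {x | f x < f v}) := by
  refine convex_iff_pairwise_pos.2 fun x hx y hy hxy a b ha hb hab => Or.inr ?_
  have hcombo : a * f v + b * f v = f v := by rw [← add_mul, hab, one_mul]
  simp only [mem_ofPred_eq, map_add, map_smul, smul_eq_mul]
  rcases hx with rfl | hx <;> rcases hy with rfl | hy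
  · exact absurd rfl hxy
  · linarith [mul_lt_mul_of_pos_left hy hb]
  · linarith [mul_lt_mul_of_pos_left hx ha]
  · linarith [mul_lt_mul_of_pos_left hx ha, mul_lt_mul_of_pos_left hy hb]

theorem convexHull_maximizers_eq_singleton (f : E →ₗ[ℝ] ℝ) {s : Set E} {v : E} (hv : v ∈ s)
    (hlt : ∀ u ∈ s, u ≠ v → f u < f v) :
    {x ∈ convexHull ℝ s | ∀ y ∈ convexHull ℝ s, f y ≤ f x} = {v} := by
  have hsub : convexHull ℝ s ⊆ insert v {x | f x < f v} := by
    refine convexHull_min (fun u hu => ?_) (convex_insert_setOf_lt f v)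
    exact (eq_or_ne u v).imp id (hlt u hu)
  have hv' : v ∈ convexHull ℝ s := subset_convexHull ℝ s hv
  ext x
  constructor
  · rintro ⟨hx, hmax⟩
    rcases hsub hx with rfl | hx'
    · rfl
    · exact absurd (hmax v hv') (not_le.2 hx')
  · rintro rfl
    refine ⟨hv', fun y hy => ?_⟩
    rcases hsub hy with rfl | hy'
    · exact le_rfl
    · exact hy'.le

theorem convexHull_insert_of_mem_convexHull {s : Set E} {x : E} (hx : x ∈ convexHull ℝ s) :
    convexHull ℝ (insert x s) = convexHull ℝ s :=
  (convexHull_min (insert_subset hx (subset_convexHull ℝ s)) (convex_convexHull ℝ s)).antisymm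
    (convexHull_mono (subset_insert x s))

end ConvexHull

def dot2Left (g : ℝ × ℝ) : ℝ × ℝ →ₗ[ℝ] ℝ where
  toFun v := dot2 v g
  map_add' u v := by simp only [dot2, Prod.fst_add, Prod.snd_add]; ring
  map_smul' c v := by
    simp only [dot2, Prod.smul_fst, Prod.smul_snd, smul_eq_mul, RingHom.id_apply]; ring

theorem argmax2_convexHull_eq_singleton {g v : ℝ × ℝ} {s : Set (ℝ × ℝ)} (hv : v ∈ s)
    (hlt : ∀ u ∈ s, u ≠ v → dot2 u g < dot2 v g) :
    argmax2 (convexHull ℝ s) g = {v} :=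
  convexHull_maximizers_eq_singleton (dot2Left g) hv hlt

theorem argmax2_P1 {g : ℝ × ℝ} (hx : 0 < g.1) (hy : 2 * g.1 < g.2) :
    argmax2 P1 g = {(1, 1)} :=
  argmax2_convexHull_eq_singleton (by simp) fun u hu => by
    rcases hu with rfl | rfl | rfl <;> norm_num [dot2] <;> linarith

theorem argmax2_P2 {g : ℝ × ℝ} (hx : 0 < g.1) (hy : 2 * g.1 < g.2) :
    argmax2 P2 g = {(-1, 1)} :=
  argmax2_convexHull_eq_singleton (by simp) fun u hu => by
    rcases hu with rfl | rfl | rfl <;> norm_num [dot2] <;> linarith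

theorem argmax2_P3 {g : ℝ × ℝ} (hx : 0 < g.1) (hy : 2 * g.1 < g.2) :
    argmax2 P3 g = {(1, 2)} :=
  argmax2_convexHull_eq_singleton (by simp) fun u hu => by
    rcases hu with rfl | rfl | rfl <;> norm_num [dot2] <;> linarith

theorem argmax2_P4 {g : ℝ × ℝ} (hx : 0 < g.1) : argmax2 P4 g = {(2, 0)} :=
  argmax2_convexHull_eq_singleton (by simp) fun u hu => by
    rcases hu with rfl | rfl <;> norm_num [dot2, hx]

theorem one_one_mem_convexHull :
    ((1, 1) : ℝ × ℝ) ∈ convexHull ℝ {(-1, 1), (1, 2), (2, 0)} := by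
  rw [convexHull_insert (insert_nonempty _ _), convexHull_pair, mem_convexJoin]
  refine ⟨(-1, 1), rfl, (3 / 2, 1), ⟨1 / 2, 1 / 2, ?_, ?_, ?_, ?_⟩, ⟨1 / 5, 4 / 5, ?_, ?_, ?_, ?_⟩⟩ <;>
    norm_num

theorem stmt8 (g : ℝ × ℝ) (hx : 0 < g.1) (hy : 2 * g.1 < g.2) :
    polyConv Ω0 g = convexHull ℝ {(-1, 1), (1, 2), (2, 0)} := by
  have hunion : (⋃ P ∈ Ω0, argmax2 P g) = {(1, 1), (-1, 1), (1, 2), (2, 0)} := by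
    simp only [Ω0, biUnion_insert, biUnion_singleton, argmax2_P1 hx hy, argmax2_P2 hx hy,
      argmax2_P3 hx hy, argmax2_P4 hx, singleton_union]
  rw [polyConv, hunion, convexHull_insert_of_mem_convexHull one_one_mem_convexHull]
end
end

section
/- Let Ω₁ be the family of polytopes consisting of conv{(-2,0),(2,0)}, conv{(0,0),(2,0)}, conv{(0,0),(1,2),(2,0)}, conv{(1,0),(1,2),(2,0)}, conv{(1,0),(-1,1),(1,2),(2,0)}, conv{(-1,1),(1,2),(2,0)}, conv{(-1,2),(1,2),(2,0),(-2,0)}, together with the reflections of these sets through the y-axis. For any g = (g_x,g_y) with g_x > 0 and -3g_x < g_y < 0, P_{Ω₁}(g) = conv{(-1,0),(1,1),(2,0)}. -/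
/-!
Maximisers of a linear functional over `conv S` form the convex hull of its maximisers over `S`,
so `P_Ω(g)` is the convex hull of the maximising vertices of the fourteen vertex sets of `Ω₁`.
For `g` in the given cone every such maximiser is `(-1, 0)`, `(1, 1)`, `(2, 0)` or `(0, 0)`,
the last one lying on the edge from `(-1, 0)` to `(2, 0)`, and each of the three corners
does occur.
-/

open Set

noncomputable section

def Ω1base : Set (Set (ℝ × ℝ)) :=
  { convexHull ℝ {(-2, 0), (2, 0)},
    convexHull ℝ {(0, 0), (2, 0)},
    convexHull ℝ {(0, 0), (1, 2), (2, 0)},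
    convexHull ℝ {(1, 0), (1, 2), (2, 0)},
    convexHull ℝ {(1, 0), (-1, 1), (1, 2), (2, 0)},
    convexHull ℝ {(-1, 1), (1, 2), (2, 0)},
    convexHull ℝ {(-1, 2), (1, 2), (2, 0), (-2, 0)} }

def Ω1 : Set (Set (ℝ × ℝ)) := Ω1base ∪ (Set.image σ2) '' Ω1base

theorem mem_convexHull_level_of_forall_le {𝕜 E : Type*} [Field 𝕜] [LinearOrder 𝕜]
    [IsStrictOrderedRing 𝕜] [AddCommGroup E] [Module 𝕜 E] {s : Set E} {f : E →ₗ[𝕜] 𝕜} {x : E}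
    (hx : x ∈ convexHull 𝕜 s) (hf : ∀ y ∈ s, f y ≤ f x) :
    x ∈ convexHull 𝕜 {y ∈ s | f y = f x} := by
  set K := convexHull 𝕜 {y ∈ s | f y = f x}
  -- The points of the half-space `f ≤ f x` that lie in `K` as soon as they reach level `f x`
  -- form a convex set: a proper convex combination reaches that level only if both ends do.
  have hconv : Convex 𝕜 {y | f y ≤ f x ∧ (f y = f x → y ∈ K)} := by
    refine convex_iff_forall_pos.2 ?_
    rintro y₁ ⟨hy₁, hK₁⟩ y₂ ⟨hy₂, hK₂⟩ a b ha hb hab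
    have hsplit : a * (f x - f y₁) + b * (f x - f y₂) = f x - f (a • y₁ + b • y₂) := by
      simp only [map_add, map_smul, smul_eq_mul]
      linear_combination f x * hab
    have h₁ : 0 ≤ a * (f x - f y₁) := mul_nonneg ha.le (sub_nonneg.2 hy₁)
    have h₂ : 0 ≤ b * (f x - f y₂) := mul_nonneg hb.le (sub_nonneg.2 hy₂)
    refine ⟨by linarith, fun heq => ?_⟩
    have e₁ : a * (f x - f y₁) = 0 := by linarith
    have e₂ : b * (f x - f y₂) = 0 := by linarith
    replace e₁ := sub_eq_zero.1 ((mul_eq_zero.1 e₁).resolve_left ha.ne')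
    replace e₂ := sub_eq_zero.1 ((mul_eq_zero.1 e₂).resolve_left hb.ne')
    exact convex_convexHull 𝕜 _ (hK₁ e₁.symm) (hK₂ e₂.symm) ha.le hb.le hab
  have hsub : s ⊆ {y | f y ≤ f x ∧ (f y = f x → y ∈ K)} := fun y hy =>
    ⟨hf y hy, fun heq => subset_convexHull 𝕜 _ ⟨hy, heq⟩⟩
  exact (convexHull_min hsub hconv hx).2 rfl

def dot2Linear (g : ℝ × ℝ) : ℝ × ℝ →ₗ[ℝ] ℝ where
  toFun v := dot2 v g
  map_add' u v := by simp only [dot2, Prod.fst_add, Prod.snd_add]; ring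
  map_smul' c v := by
    simp only [dot2, Prod.smul_fst, Prod.smul_snd, smul_eq_mul, RingHom.id_apply]; ring

theorem argmax2_subset_argmax2_convexHull (S : Set (ℝ × ℝ)) (g : ℝ × ℝ) :
    argmax2 S g ⊆ argmax2 (convexHull ℝ S) g := fun _ ⟨hv, hmax⟩ =>
  ⟨subset_convexHull ℝ S hv, fun _ hu =>
    convexHull_min hmax (convex_halfSpace_le (dot2Linear g).isLinear _) hu⟩

theorem argmax2_convexHull_subset (S : Set (ℝ × ℝ)) (g : ℝ × ℝ) :
    argmax2 (convexHull ℝ S) g ⊆ convexHull ℝ (argmax2 S g) := by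
  rintro x ⟨hx, hmax⟩
  have hle : ∀ y ∈ S, dot2Linear g y ≤ dot2Linear g x := fun y hy =>
    hmax y (subset_convexHull ℝ S hy)
  refine convexHull_mono ?_ (mem_convexHull_level_of_forall_le hx hle)
  rintro y ⟨hy, heq⟩
  exact ⟨hy, fun u hu => (hle u hu).trans_eq heq.symm⟩

theorem polyConv_image_convexHull (V : Set (Set (ℝ × ℝ))) (g : ℝ × ℝ) :
    polyConv (convexHull ℝ '' V) g = convexHull ℝ (⋃ S ∈ V, argmax2 S g) := by
  rw [polyConv, biUnion_image]
  refine (convexHull_min (iUnion₂_subset fun S hS => ?_) (convex_convexHull ℝ _)).antisymm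
    (convexHull_mono (biUnion_mono subset_rfl fun S _ => argmax2_subset_argmax2_convexHull S g))
  exact (argmax2_convexHull_subset S g).trans
    (convexHull_mono (subset_biUnion_of_mem (u := fun S => argmax2 S g) hS))

theorem isLinearMap_σ2 : IsLinearMap ℝ σ2 :=
  ⟨fun u v => by simp only [σ2, Prod.fst_add, Prod.snd_add, neg_add, Prod.mk_add_mk],
    fun c v => by simp only [σ2, Prod.smul_fst, Prod.smul_snd, smul_neg, Prod.smul_mk]⟩

def Ω1baseVertices : Set (Set (ℝ × ℝ)) :=
  { {(-2, 0), (2, 0)},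
    {(0, 0), (2, 0)},
    {(0, 0), (1, 2), (2, 0)},
    {(1, 0), (1, 2), (2, 0)},
    {(1, 0), (-1, 1), (1, 2), (2, 0)},
    {(-1, 1), (1, 2), (2, 0)},
    {(-1, 2), (1, 2), (2, 0), (-2, 0)} }

def Ω1Vertices : Set (Set (ℝ × ℝ)) := Ω1baseVertices ∪ image σ2 '' Ω1baseVertices

theorem Ω1_eq_image_convexHull : Ω1 = convexHull ℝ '' Ω1Vertices := by
  have hbase : Ω1base = convexHull ℝ '' Ω1baseVertices := by
    simp only [Ω1base, Ω1baseVertices, image_insert_eq, image_singleton]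
  rw [Ω1, Ω1Vertices, hbase, image_union, image_image, image_image]
  simp only [isLinearMap_σ2.image_convexHull]

-- Every vertex set contains `(2, 0)`, `(1, 1)`, `(0, 0)` or `(-1, 0)`, and for `g` in the cone
-- that vertex strictly beats each vertex of its set lying outside the target set.
theorem biUnion_argmax2_Ω1Vertices_subset {g : ℝ × ℝ} (hx : 0 < g.1) (hy₁ : -3 * g.1 < g.2)
    (hy₂ : g.2 < 0) : ⋃ S ∈ Ω1Vertices, argmax2 S g ⊆ {(-1, 0), (1, 1), (2, 0), (0, 0)} := by
  simp only [Ω1Vertices, Ω1baseVertices, biUnion_union, biUnion_insert, biUnion_singleton,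
    union_subset_iff, image_insert_eq, image_singleton, σ2]
  norm_num
  repeat' constructor
  all_goals
    rintro v ⟨hv, hmax⟩
    simp only [mem_insert_iff, mem_singleton_iff] at hv
    rcases hv with rfl | rfl | rfl | rfl <;>
      norm_num [dot2] at hmax ⊢ <;> (try casesm* _ ∧ _) <;> linarith

theorem triangle_vertices_subset_biUnion_argmax2 {g : ℝ × ℝ} (hx : 0 < g.1)
    (hy₁ : -3 * g.1 < g.2) (hy₂ : g.2 < 0) :
    {(-1, 0), (1, 1), (2, 0)} ⊆ ⋃ S ∈ Ω1Vertices, argmax2 S g := by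
  have hσ : ∀ S ∈ Ω1baseVertices, σ2 '' S ∈ Ω1Vertices := fun S hS =>
    Or.inr (mem_image_of_mem _ hS)
  simp only [insert_subset_iff, singleton_subset_iff]
  refine ⟨mem_biUnion (hσ {(1, 0), (1, 2), (2, 0)} (by simp [Ω1baseVertices])) ?_,
    mem_biUnion (hσ {(-1, 1), (1, 2), (2, 0)} (by simp [Ω1baseVertices])) ?_,
    mem_biUnion (x := {(-2, 0), (2, 0)}) (Or.inl (by simp [Ω1baseVertices])) ?_⟩
  all_goals
    simp only [argmax2, image_insert_eq, image_singleton, σ2]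
    norm_num [dot2]
    (try refine ⟨?_, ?_⟩) <;> linarith

theorem insert_origin_subset_triangle :
    ({(-1, 0), (1, 1), (2, 0), (0, 0)} : Set (ℝ × ℝ)) ⊆
      convexHull ℝ {(-1, 0), (1, 1), (2, 0)} := by
  have h₀ : ((0, 0) : ℝ × ℝ) ∈ segment ℝ (-1, 0) (2, 0) :=
    ⟨2 / 3, 1 / 3, by norm_num, by norm_num, by norm_num, by norm_num⟩
  simp only [insert_subset_iff, singleton_subset_iff]
  exact ⟨subset_convexHull ℝ _ (by simp), subset_convexHull ℝ _ (by simp),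
    subset_convexHull ℝ _ (by simp), segment_subset_convexHull (by simp) (by simp) h₀⟩

theorem stmt16 (g : ℝ × ℝ) (hx : 0 < g.1) (hy1 : -3 * g.1 < g.2) (hy2 : g.2 < 0) :
    polyConv Ω1 g = convexHull ℝ {(-1, 0), (1, 1), (2, 0)} := by
  rw [Ω1_eq_image_convexHull, polyConv_image_convexHull]
  refine Subset.antisymm ?_ (convexHull_mono (triangle_vertices_subset_biUnion_argmax2 hx hy1 hy2))
  exact convexHull_min ((biUnion_argmax2_Ω1Vertices_subset hx hy1 hy2).trans
    insert_origin_subset_triangle) (convex_convexHull ℝ _)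
end
end
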